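/- arXiv:1502.04189 — 2 statements merged into one kernel-verified Lean document; each statement's English description precedes it below -/
import Mathlib

section
/- Let M = X X† be a complex Wishart matrix where X is n×m (m ≥ n) with i.i.d. standard complex Gaussian entries. The probability that all eigenvalues of M lie in [a,b] ⊂ [0,∞) equals K · det(A(a,b)), where A(a,b) is the n×n matrix with entries a_{i,j} = ∫ₐᵇ t^{m+n−i−j} e^{−t} dt (the generalized incomplete gamma function γ(m+n−i−j+1; a, b)), and 1/K = ∏_{i=1}^{n} (m−i)! (n−i)!. -/
/-!
The density is symmetric in the eigenvalues, and the chambers `{x | Antitone (x ∘ σ)}` cover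
`[a,b]^n` and overlap only where two coordinates coincide, a null set; so the integral over the
ordered chamber is `1/n!` times the integral over the whole box. On the box, expanding
`det V(x)^2 = ∑_{σ,τ} sgn σ sgn τ ∏ᵢ xᵢ^(σ i + τ i)` and applying Fubini turns the integral into
a double sum over permutations of products of moments `∫ₐᵇ w(t) t^k dt` of the weight
`w(t) = e^(-t) t^(m-n)`, which collapses to
`n! det (∫ₐᵇ w(t) t^(i+j) dt)` (Andréief's identity). Reversing both indices gives the matrix
of the statement.
-/

open MeasureTheory Real Equiv Matrix Set Function
open scoped Nat

theorem Matrix.sum_perm_sum_perm_sign_mul_prod {R ι : Type*} [CommRing R] [Fintype ι]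
    [DecidableEq ι] (A : Matrix ι ι R) :
    ∑ σ : Perm ι, ∑ τ : Perm ι, ((Perm.sign σ : ℤ) : R) * (Perm.sign τ : ℤ) *
        ∏ i, A (σ i) (τ i) = (Fintype.card ι)! * A.det := by
  have inner (σ : Perm ι) :
      ∑ τ : Perm ι, ((Perm.sign σ : ℤ) : R) * (Perm.sign τ : ℤ) * ∏ i, A (σ i) (τ i) = A.det := by
    rw [← det_transpose, det_apply', ← Equiv.sum_comp (Equiv.mulRight σ)]
    refine Finset.sum_congr rfl fun ρ _ => ?_
    have hsign : ((Perm.sign σ : ℤ) : R) * (Perm.sign (ρ * σ) : ℤ) = (Perm.sign ρ : ℤ) := by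
      rcases Int.units_eq_one_or (Perm.sign σ) with h | h <;> simp [h]
    simp only [coe_mulRight, Perm.mul_apply, transpose_apply]
    rw [hsign, Equiv.prod_comp σ (fun j => A j (ρ j))]
  simp [inner, Fintype.card_perm]

variable {n : ℕ}

theorem Matrix.det_vandermonde_eq_sum {R : Type*} [CommRing R] (x : Fin n → R) :
    (vandermonde x).det = ∑ σ : Perm (Fin n), ((Perm.sign σ : ℤ) : R) * ∏ i, x i ^ (σ i : ℕ) := by
  rw [← det_transpose, det_apply']
  simp [vandermonde_apply]

theorem Matrix.prod_mul_det_vandermonde_sq {R : Type*} [CommRing R] (w : R → R) (x : Fin n → R) :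
    (∏ i, w (x i)) * (vandermonde x).det ^ 2 =
      ∑ σ : Perm (Fin n), ∑ τ : Perm (Fin n), ((Perm.sign σ : ℤ) : R) * (Perm.sign τ : ℤ) *
        ∏ i, w (x i) * x i ^ (σ i + τ i : ℕ) := by
  rw [sq, det_vandermonde_eq_sum, Finset.sum_mul_sum, Finset.mul_sum]
  refine Finset.sum_congr rfl fun σ _ => ?_
  rw [Finset.mul_sum]
  refine Finset.sum_congr rfl fun τ _ => ?_
  simp only [pow_add, Finset.prod_mul_distrib]
  ring

theorem Matrix.prod_Ioi_sub_sq_eq_det_vandermonde_sq {R : Type*} [CommRing R] (x : Fin n → R) :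
    (∏ i : Fin n, ∏ j ∈ Finset.Ioi i, (x i - x j)) ^ 2 = (vandermonde x).det ^ 2 := by
  simp only [det_vandermonde, ← Finset.prod_pow]
  exact Finset.prod_congr rfl fun i _ => Finset.prod_congr rfl fun j _ => by ring

theorem Matrix.det_vandermonde_comp_perm_sq {R : Type*} [CommRing R] (x : Fin n → R)
    (σ : Perm (Fin n)) : (vandermonde (x ∘ σ)).det ^ 2 = (vandermonde x).det ^ 2 := by
  rw [show vandermonde (x ∘ σ) = (vandermonde x).submatrix σ id from rfl, det_permute, mul_pow,
    ← Int.cast_pow, ← Units.val_pow_eq_pow_val, Int.units_sq, Units.val_one, Int.cast_one, one_mul]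

section PiIntegral

variable {ι E : Type*} [Fintype ι] [MeasureSpace E] [SigmaFinite (volume : Measure E)]
  {S : Set E} {g : ι → E → ℝ}

theorem setIntegral_univ_pi_prod :
    ∫ x in univ.pi fun _ => S, ∏ i, g i (x i) = ∏ i, ∫ t in S, g i t := by
  rw [volume_pi, Measure.restrict_pi_pi, integral_fintype_prod_eq_prod]

theorem integrableOn_univ_pi_prod (hg : ∀ i, IntegrableOn (g i) S) :
    IntegrableOn (fun x : ι → E => ∏ i, g i (x i)) (univ.pi fun _ => S) := by
  rw [IntegrableOn, volume_pi, Measure.restrict_pi_pi]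
  exact Integrable.fintype_prod hg

end PiIntegral

section Heine

variable {S : Set ℝ} {w : ℝ → ℝ}

theorem integrableOn_prod_mul_det_vandermonde_sq
    (hw : ∀ k : ℕ, IntegrableOn (fun t => w t * t ^ k) S) :
    IntegrableOn (fun x : Fin n → ℝ => (∏ i, w (x i)) * (vandermonde x).det ^ 2)
      (univ.pi fun _ => S) := by
  simp_rw [prod_mul_det_vandermonde_sq]
  refine integrable_finsetSum _ fun σ _ => integrable_finsetSum _ fun τ _ => ?_
  exact (integrableOn_univ_pi_prod fun i => hw _).const_mul _

theorem setIntegral_prod_mul_det_vandermonde_sq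
    (hw : ∀ k : ℕ, IntegrableOn (fun t => w t * t ^ k) S) :
    ∫ x in univ.pi (fun _ : Fin n => S), (∏ i, w (x i)) * (vandermonde x).det ^ 2 =
      n ! * (of fun i j : Fin n => ∫ t in S, w t * t ^ (i + j : ℕ)).det := by
  have hterm (σ τ : Perm (Fin n)) : IntegrableOn (fun x : Fin n → ℝ =>
      ((Perm.sign σ : ℤ) : ℝ) * (Perm.sign τ : ℤ) * ∏ i, w (x i) * x i ^ (σ i + τ i : ℕ))
      (univ.pi fun _ => S) :=
    (integrableOn_univ_pi_prod fun i => hw _).const_mul _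
  simp_rw [prod_mul_det_vandermonde_sq]
  rw [integral_finsetSum _ fun σ _ => integrable_finsetSum _ fun τ _ => hterm σ τ,
    Finset.sum_congr rfl fun σ _ => integral_finsetSum _ fun τ _ => hterm σ τ]
  have hfubini (σ τ : Perm (Fin n)) :
      ∫ x in univ.pi (fun _ : Fin n => S), ∏ i, w (x i) * x i ^ (σ i + τ i : ℕ) =
        ∏ i, ∫ t in S, w t * t ^ (σ i + τ i : ℕ) :=
    setIntegral_univ_pi_prod (g := fun i t => w t * t ^ (σ i + τ i : ℕ))
  simp_rw [integral_const_mul, hfubini]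
  simpa using
    sum_perm_sum_perm_sign_mul_prod (of fun i j : Fin n => ∫ t in S, w t * t ^ (i + j : ℕ))

end Heine

theorem volume_setOf_not_injective {ι : Type*} [Fintype ι] :
    volume {x : ι → ℝ | ¬Injective x} = 0 := by
  classical
  have hdiag {i j : ι} (hij : i ≠ j) : volume {x : ι → ℝ | x i = x j} = 0 := by
    have hker : {x : ι → ℝ | x i = x j} =
        LinearMap.ker ((LinearMap.proj i : (ι → ℝ) →ₗ[ℝ] ℝ) - LinearMap.proj j) := by
      ext x
      simp [sub_eq_zero]
    rw [hker]
    refine Measure.addHaar_submodule _ _ fun htop => ?_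
    have hsingle : Pi.single i 1 ∈
        LinearMap.ker ((LinearMap.proj i : (ι → ℝ) →ₗ[ℝ] ℝ) - LinearMap.proj j) := by
      simp [htop]
    simp [Pi.single_eq_of_ne hij.symm] at hsingle
  have hcover : {x : ι → ℝ | ¬Injective x} ⊆ ⋃ (i) (j) (_ : i ≠ j), {x | x i = x j} := by
    intro x hx
    simp only [Injective, not_forall] at hx
    obtain ⟨i, j, hxij, hij⟩ := hx
    simp only [mem_iUnion, mem_ofPred_eq]
    exact ⟨i, j, hij, hxij⟩
  exact measure_mono_null hcover (measure_iUnion_null fun i => measure_iUnion_null fun j =>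
    measure_iUnion_null fun hij => hdiag hij)

theorem measurableSet_setOf_antitone {ι : Type*} [Preorder ι] [Countable ι] :
    MeasurableSet {x : ι → ℝ | Antitone x} := by
  simp only [Antitone, ofPred_forall]
  exact MeasurableSet.iInter fun i => MeasurableSet.iInter fun j => MeasurableSet.iInter fun _ =>
    measurableSet_le (measurable_pi_apply j) (measurable_pi_apply i)

theorem exists_perm_antitone_comp {α : Type*} [LinearOrder α] (x : Fin n → α) :
    ∃ σ : Perm (Fin n), Antitone (x ∘ σ) :=
  ⟨Fin.revPerm.trans (Tuple.sort x), (Tuple.monotone_sort x).comp_antitone Fin.rev_anti⟩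

theorem setIntegral_eq_factorial_mul_setIntegral_antitone {s : Set (Fin n → ℝ)}
    (hs : MeasurableSet s) (hs_perm : ∀ σ : Perm (Fin n), (· ∘ σ) ⁻¹' s = s)
    {f : (Fin n → ℝ) → ℝ} (hf_perm : ∀ (σ : Perm (Fin n)) x, f (x ∘ σ) = f x)
    (hf : IntegrableOn f s) :
    ∫ x in s, f x = n ! * ∫ x in s ∩ {x | Antitone x}, f x := by
  set e : Perm (Fin n) → (Fin n → ℝ) ≃ᵐ (Fin n → ℝ) :=
    fun σ => MeasurableEquiv.arrowCongr' σ.symm (MeasurableEquiv.refl ℝ)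
  have he (σ : Perm (Fin n)) : e σ ⁻¹' (s ∩ {x | Antitone x}) = s ∩ {x | Antitone (x ∘ σ)} := by
    ext x
    exact and_congr_left' (Set.ext_iff.1 (hs_perm σ) x)
  have hcover : ⋃ σ : Perm (Fin n), s ∩ {x | Antitone (x ∘ σ)} = s := by
    rw [← inter_iUnion, inter_eq_left]
    intro x _
    simpa using exists_perm_antitone_comp x
  have hdisj :
      Pairwise (AEDisjoint volume on fun σ : Perm (Fin n) => s ∩ {x | Antitone (x ∘ σ)}) := by
    intro σ τ hστ
    refine measure_mono_null (fun x ⟨⟨_, hσ⟩, _, hτ⟩ => ?_) volume_setOf_not_injective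
    exact fun hx => hστ (Equiv.ext fun i => hx (congrFun (Tuple.unique_antitone hσ hτ) i))
  have hpiece (σ : Perm (Fin n)) :
      ∫ x in s ∩ {x | Antitone (x ∘ σ)}, f x = ∫ x in s ∩ {x | Antitone x}, f x := by
    rw [← he]
    refine Eq.trans ?_ ((volume_preserving_arrowCongr' _ _ (.id _)).setIntegral_preimage_emb
      (e σ).measurableEmbedding f _)
    exact setIntegral_congr_fun ((e σ).measurable (hs.inter measurableSet_setOf_antitone))
      fun x _ => (hf_perm σ x).symm
  have hmeas (σ : Perm (Fin n)) : MeasurableSet (s ∩ {x | Antitone (x ∘ σ)}) := by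
    rw [← he]
    exact (e σ).measurable (hs.inter measurableSet_setOf_antitone)
  calc ∫ x in s, f x = ∫ x in ⋃ σ : Perm (Fin n), s ∩ {x | Antitone (x ∘ σ)}, f x := by
        rw [hcover]
    _ = n ! * ∫ x in s ∩ {x | Antitone x}, f x := by
        rw [integral_iUnion_ae (fun σ => (hmeas σ).nullMeasurableSet) hdisj (by rwa [hcover]),
          tsum_fintype]
        simp [hpiece, Fintype.card_perm]

theorem setIntegral_antitone_prod_mul_det_vandermonde_sq {S : Set ℝ} (hS : MeasurableSet S)
    {w : ℝ → ℝ} (hw : ∀ k : ℕ, IntegrableOn (fun t => w t * t ^ k) S) :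
    ∫ x in (univ.pi fun _ : Fin n => S) ∩ {x | Antitone x},
        (∏ i, w (x i)) * (vandermonde x).det ^ 2 =
      (of fun i j : Fin n => ∫ t in S, w t * t ^ (i + j : ℕ)).det := by
  have hsymm (σ : Perm (Fin n)) (x : Fin n → ℝ) :
      (∏ i, w ((x ∘ σ) i)) * (vandermonde (x ∘ σ)).det ^ 2 =
        (∏ i, w (x i)) * (vandermonde x).det ^ 2 := by
    rw [det_vandermonde_comp_perm_sq, ← Equiv.prod_comp σ fun i => w (x i)]
    rfl
  have hbox (σ : Perm (Fin n)) : (· ∘ σ) ⁻¹' (univ.pi fun _ => S) = univ.pi fun _ => S := by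
    ext x
    simp only [mem_preimage, mem_univ_pi, Function.comp_apply]
    exact ⟨fun h i => by simpa using h (σ.symm i), fun h i => h (σ i)⟩
  refine mul_left_cancel₀ (Nat.cast_ne_zero.2 n.factorial_ne_zero : (n ! : ℝ) ≠ 0) ?_
  rw [← setIntegral_eq_factorial_mul_setIntegral_antitone (.univ_pi fun _ => hS) hbox hsymm
    (integrableOn_prod_mul_det_vandermonde_sq hw), setIntegral_prod_mul_det_vandermonde_sq hw]

theorem complex_wishart_psi_general (n m : ℕ) (hm : n ≤ m) (a b : ℝ) (hab : a ≤ b) :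
    (∫ x in {x : Fin n → ℝ | (∀ i j : Fin n, i ≤ j → x j ≤ x i) ∧ ∀ i, x i ∈ Set.Icc a b},
        (∏ i ∈ Finset.range n, ((m - 1 - i).factorial * (n - 1 - i).factorial : ℝ))⁻¹ *
          ((∏ i, Real.exp (-(x i)) * x i ^ (m - n)) *
            (∏ i : Fin n, ∏ j ∈ Finset.Ioi i, (x i - x j)) ^ 2)) =
      (∏ i ∈ Finset.range n, ((m - 1 - i).factorial * (n - 1 - i).factorial : ℝ))⁻¹ *
        (Matrix.of fun i j : Fin n =>
          ∫ t in a..b, t ^ (m + n - (i.1 + 1) - (j.1 + 1)) * Real.exp (-t)).det := by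
  set w : ℝ → ℝ := fun t => exp (-t) * t ^ (m - n)
  have hw (k : ℕ) : IntegrableOn (fun t => w t * t ^ k) (Icc a b) :=
    (by fun_prop : Continuous fun t => w t * t ^ k).integrableOn_Icc
  have hregion : {x : Fin n → ℝ | (∀ i j : Fin n, i ≤ j → x j ≤ x i) ∧ ∀ i, x i ∈ Icc a b} =
      (univ.pi fun _ => Icc a b) ∩ {x | Antitone x} := by
    ext x
    simp only [mem_ofPred_eq, mem_inter_iff, mem_univ_pi, Antitone]
    exact and_comm
  have hdensity (x : Fin n → ℝ) : (∏ i, exp (-(x i)) * x i ^ (m - n)) *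
      (∏ i : Fin n, ∏ j ∈ Finset.Ioi i, (x i - x j)) ^ 2 =
        (∏ i, w (x i)) * (vandermonde x).det ^ 2 := by
    rw [prod_Ioi_sub_sq_eq_det_vandermonde_sq]
  have hmoments : (of fun i j : Fin n =>
        ∫ t in a..b, t ^ (m + n - (i.1 + 1) - (j.1 + 1)) * exp (-t)) =
      (of fun i j : Fin n => ∫ t in Icc a b, w t * t ^ (i + j : ℕ)).submatrix
        Fin.revPerm Fin.revPerm := by
    ext i j
    simp only [of_apply, submatrix_apply, Fin.revPerm_apply, Fin.val_rev, w]
    rw [intervalIntegral.integral_of_le hab, ← integral_Icc_eq_integral_Ioc]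
    refine setIntegral_congr_fun measurableSet_Icc fun t _ => ?_
    rw [mul_assoc, ← pow_add, mul_comm]
    -- `m + n - (i + 1) - (j + 1) = (m - n) + (n - 1 - i) + (n - 1 - j)` needs `n ≤ m`
    congr 2
    omega
  simp_rw [hdensity, hregion, integral_const_mul, hmoments, det_submatrix_equiv_self,
    setIntegral_antitone_prod_mul_det_vandermonde_sq measurableSet_Icc hw]

/-- For a complex white Wishart matrix `M = X X†` (`X` is `n×m`, `m ≥ n`, i.i.d. standard
complex Gaussian entries), whose ordered-eigenvalue joint density is
`K ∏ᵢ e^(−xᵢ) xᵢ^(m−n) ∏_{i<j}(xᵢ−xⱼ)²` with `1/K = ∏_{i=1}^n (m−i)! (n−i)!`,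
the probability that all eigenvalues lie in `[a,b] ⊂ [0,∞)` equals `K · det A(a,b)`
where `a_{i,j} = ∫ₐᵇ t^(m+n−i−j) e^(−t) dt`. -/
theorem complex_wishart_psi (n m : ℕ) (hn : 1 ≤ n) (hm : n ≤ m) (a b : ℝ)
    (ha : 0 ≤ a) (hab : a ≤ b) :
    (∫ x in {x : Fin n → ℝ | (∀ i j : Fin n, i ≤ j → x j ≤ x i) ∧ ∀ i, x i ∈ Set.Icc a b},
        (∏ i ∈ Finset.range n, ((m - 1 - i).factorial * (n - 1 - i).factorial : ℝ))⁻¹ *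
          ((∏ i, Real.exp (-(x i)) * x i ^ (m - n)) *
            (∏ i : Fin n, ∏ j ∈ Finset.Ioi i, (x i - x j)) ^ 2)) =
      (∏ i ∈ Finset.range n, ((m - 1 - i).factorial * (n - 1 - i).factorial : ℝ))⁻¹ *
        (Matrix.of fun i j : Fin n =>
          ∫ t in a..b, t ^ (m + n - (i.1 + 1) - (j.1 + 1)) * Real.exp (-t)).det :=
  complex_wishart_psi_general n m hm a b hab
end

section
/- Let f : ℝⁿ → ℝ be f(x) = K ∏_{i<j}(x_i − x_j)² ∏_i e^{−x_i²} with K = 2^{n(n−1)/2} / (π^{n/2} ∏_{i=1}^n Γ(i)). The integral of f over the ordered region x₁ ≥ x₂ ≥ ⋯ ≥ xₙ equals 1, i.e., f is the eigenvalue density of the n×n GUE (up to this normalization, also known as the Mehta integral for β = 2). -/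
open MeasureTheory Real
open Polynomial

noncomputable def Hk (k : ℕ) : ℝ[X] := (Polynomial.hermite k).map (Int.castRingHom ℝ)

lemma Hk_monic (k : ℕ) : (Hk k).Monic :=
  (Polynomial.hermite_monic k).map _

lemma Hk_natDegree (k : ℕ) : (Hk k).natDegree = k := by
  rw [Hk, Polynomial.natDegree_map_eq_of_injective (Int.cast_injective), Polynomial.natDegree_hermite]

lemma Hk_succ (k : ℕ) : Hk (k+1) = X * Hk k - derivative (Hk k) := by
  rw [Hk, Polynomial.hermite_succ, Polynomial.map_sub, Polynomial.map_mul, Polynomial.map_X,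
    ← Polynomial.derivative_map]
  rfl

-- integrability of polynomial × gaussian
lemma integrable_poly_gauss (P : ℝ[X]) {b : ℝ} (hb : 0 < b) :
    Integrable fun x : ℝ => P.eval x * Real.exp (-b * x ^ 2) := by
  have : (fun x : ℝ => P.eval x * Real.exp (-b * x ^ 2)) =
      fun x => ∑ k ∈ Finset.range (P.natDegree + 1), (P.coeff k * (x ^ k * Real.exp (-b * x ^ 2))) := by
    funext x
    simp_rw [← mul_assoc, ← Finset.sum_mul]
    rw [← Polynomial.eval_eq_sum_range]
  rw [this]
  apply integrable_finset_sum
  intro k _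
  apply Integrable.const_mul
  have := integrable_rpow_mul_exp_neg_mul_sq hb (s := (k : ℝ)) (by exact_mod_cast neg_one_lt_zero.trans_le (Nat.cast_nonneg k))
  simpa [Real.rpow_natCast] using this

lemma hasDerivAt_Hk_gauss (k : ℕ) (x : ℝ) :
    HasDerivAt (fun y => (Hk k).eval y * Real.exp (-(y ^ 2 / 2)))
      (-((Hk (k+1)).eval x * Real.exp (-(x ^ 2 / 2)))) x := by
  have hg : HasDerivAt (fun y : ℝ => Real.exp (-(y ^ 2 / 2))) (-x * Real.exp (-(x ^ 2 / 2))) x := by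
    have h1 : HasDerivAt (fun y : ℝ => -(y ^ 2 / 2)) (-x) x := by
      exact (((hasDerivAt_pow 2 x).div_const 2).neg).congr_deriv (by norm_num)
    simpa [mul_comm] using h1.exp
  have hp : HasDerivAt (fun y => (Hk k).eval y) ((derivative (Hk k)).eval x) x :=
    (Hk k).hasDerivAt x
  have := hp.mul hg
  refine this.congr_deriv ?_
  rw [Hk_succ]
  simp
  ring

lemma integrable_poly_gauss' (P : ℝ[X]) :
    Integrable fun x : ℝ => P.eval x * Real.exp (-(x ^ 2 / 2)) := by
  have := integrable_poly_gauss P (b := (1/2 : ℝ)) (by norm_num)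
  convert this using 2 with x
  ring_nf

lemma ibp_iterate (k : ℕ) : ∀ P : ℝ[X],
    (∫ x : ℝ, P.eval x * ((Hk k).eval x * Real.exp (-(x ^ 2 / 2))))
      = ∫ x : ℝ, ((derivative^[k]) P).eval x * Real.exp (-(x ^ 2 / 2)) := by
  induction k with
  | zero =>
      intro P
      simp [Hk, Polynomial.hermite_zero]
  | succ k ih =>
      intro P
      have hint : ∀ Q : ℝ[X], Integrable fun x : ℝ => Q.eval x * Real.exp (-(x ^ 2 / 2)) :=
        integrable_poly_gauss'
      have huv' : Integrable ((fun x : ℝ => P.eval x) *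
          (fun x => -((Hk (k+1)).eval x * Real.exp (-(x ^ 2 / 2))))) := by
        have := (hint (P * Hk (k+1))).neg
        refine this.congr (Filter.Eventually.of_forall fun x => ?_)
        simp [Pi.mul_apply]; ring
      have hu'v : Integrable ((fun x : ℝ => (derivative P).eval x) *
          (fun x => (Hk k).eval x * Real.exp (-(x ^ 2 / 2)))) := by
        have := hint (derivative P * Hk k)
        refine this.congr (Filter.Eventually.of_forall fun x => ?_)
        simp [Pi.mul_apply]; ring
      have huv : Integrable ((fun x : ℝ => P.eval x) *
          (fun x => (Hk k).eval x * Real.exp (-(x ^ 2 / 2)))) := by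
        have := hint (P * Hk k)
        refine this.congr (Filter.Eventually.of_forall fun x => ?_)
        simp [Pi.mul_apply]; ring
      have key := MeasureTheory.integral_mul_deriv_eq_deriv_mul_of_integrable
        (u := fun x : ℝ => P.eval x) (v := fun x => (Hk k).eval x * Real.exp (-(x ^ 2 / 2)))
        (u' := fun x => (derivative P).eval x)
        (v' := fun x => -((Hk (k+1)).eval x * Real.exp (-(x ^ 2 / 2))))
        (fun x _ => P.hasDerivAt x) (fun x _ => hasDerivAt_Hk_gauss k x) huv' hu'v huv
      have lhs_eq : (∫ x : ℝ, P.eval x * ((Hk (k+1)).eval x * Real.exp (-(x ^ 2 / 2))))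
          = - ∫ x : ℝ, P.eval x * (-((Hk (k+1)).eval x * Real.exp (-(x ^ 2 / 2)))) := by
        rw [← integral_neg]; congr 1; funext x; ring
      rw [lhs_eq, key, neg_neg, ih (derivative P), ← Function.iterate_succ_apply]

lemma Hk_orth {j k : ℕ} (hjk : j ≤ k) :
    (∫ x : ℝ, (Hk j).eval x * ((Hk k).eval x * Real.exp (-(x ^ 2 / 2))))
      = if j = k then (Nat.factorial k : ℝ) * Real.sqrt (2 * π) else 0 := by
  rw [ibp_iterate k (Hk j)]
  rcases lt_or_eq_of_le hjk with h | h
  · rw [if_neg h.ne]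
    have : derivative^[k] (Hk j) = 0 :=
      Polynomial.iterate_derivative_eq_zero (by rw [Hk_natDegree]; exact h)
    simp [this]
  · subst h
    rw [if_pos rfl]
    have hdeg : (derivative^[j] (Hk j)).natDegree = 0 :=
      Nat.le_zero.mp (le_trans (Polynomial.natDegree_iterate_derivative _ _)
        (by rw [Hk_natDegree, Nat.sub_self]))
    have hC : derivative^[j] (Hk j) = C ((Nat.factorial j) : ℝ) := by
      rw [Polynomial.eq_C_of_natDegree_le_zero hdeg.le, Polynomial.coeff_iterate_derivative]
      congr 1
      rw [zero_add, Nat.descFactorial_self]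
      have : (Hk j).coeff j = 1 := by
        have := (Hk_monic j).coeff_natDegree
        rwa [Hk_natDegree] at this
      rw [this]
      simp
    rw [hC]
    simp_rw [Polynomial.eval_C]
    rw [MeasureTheory.integral_const_mul]
    congr 1
    have : ∀ x : ℝ, Real.exp (-(x ^ 2 / 2)) = Real.exp (-(1/2 : ℝ) * x ^ 2) := by
      intro x; ring_nf
    simp_rw [this]
    rw [integral_gaussian]
    norm_num
    rw [mul_comm]

noncomputable def Qp (k : ℕ) : ℝ[X] :=
  C (((Real.sqrt 2) ^ k)⁻¹) * (Hk k).comp (C (Real.sqrt 2) * X)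

lemma sqrt2_pos : (0:ℝ) < Real.sqrt 2 := Real.sqrt_pos.mpr (by norm_num)

lemma Qp_eval (k : ℕ) (x : ℝ) :
    (Qp k).eval x = ((Real.sqrt 2) ^ k)⁻¹ * (Hk k).eval (Real.sqrt 2 * x) := by
  simp [Qp]

lemma Qp_natDegree (k : ℕ) : (Qp k).natDegree = k := by
  rw [Qp, Polynomial.natDegree_C_mul (by positivity), Polynomial.natDegree_comp,
    Polynomial.natDegree_C_mul_X _ (by positivity), Hk_natDegree, mul_one]

lemma Qp_monic (k : ℕ) : (Qp k).Monic := by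
  have hdeg : (C (Real.sqrt 2) * X : ℝ[X]).natDegree ≠ 0 := by
    rw [Polynomial.natDegree_C_mul_X _ (by positivity)]; norm_num
  unfold Polynomial.Monic
  rw [Qp, Polynomial.leadingCoeff_mul, Polynomial.leadingCoeff_C,
    Polynomial.leadingCoeff_comp hdeg, (Hk_monic k).leadingCoeff, Hk_natDegree]
  have : (C (Real.sqrt 2) * X : ℝ[X]).leadingCoeff = Real.sqrt 2 := by
    rw [Polynomial.leadingCoeff_mul, Polynomial.leadingCoeff_C, Polynomial.leadingCoeff_X, mul_one]
  rw [this, one_mul]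
  field_simp

lemma Qp_orth_le {j k : ℕ} (hjk : j ≤ k) :
    (∫ x : ℝ, (Qp j).eval x * ((Qp k).eval x * Real.exp (-x ^ 2)))
      = if j = k then (Nat.factorial k : ℝ) * Real.sqrt π / 2 ^ k else 0 := by
  have hexp : ∀ x : ℝ, Real.exp (-x ^ 2) = Real.exp (-((Real.sqrt 2 * x) ^ 2 / 2)) := by
    intro x
    rw [mul_pow, Real.sq_sqrt (by norm_num : (0:ℝ) ≤ 2)]
    ring_nf
  have step1 : (∫ x : ℝ, (Qp j).eval x * ((Qp k).eval x * Real.exp (-x ^ 2)))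
      = ((Real.sqrt 2) ^ j)⁻¹ * (((Real.sqrt 2) ^ k)⁻¹ *
        ∫ x : ℝ, (Hk j).eval (Real.sqrt 2 * x) *
          ((Hk k).eval (Real.sqrt 2 * x) * Real.exp (-((Real.sqrt 2 * x) ^ 2 / 2)))) := by
    rw [← MeasureTheory.integral_const_mul, ← MeasureTheory.integral_const_mul]
    congr 1; funext x
    rw [Qp_eval, Qp_eval, hexp]
    ring
  have step2 : (∫ x : ℝ, (Hk j).eval (Real.sqrt 2 * x) *
          ((Hk k).eval (Real.sqrt 2 * x) * Real.exp (-((Real.sqrt 2 * x) ^ 2 / 2))))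
      = |(Real.sqrt 2)⁻¹| • ∫ y : ℝ, (Hk j).eval y * ((Hk k).eval y * Real.exp (-(y ^ 2 / 2))) :=
    MeasureTheory.Measure.integral_comp_mul_left
      (fun y => (Hk j).eval y * ((Hk k).eval y * Real.exp (-(y ^ 2 / 2)))) (Real.sqrt 2)
  rw [step1, step2, Hk_orth hjk]
  rcases eq_or_ne j k with h | h
  · subst h
    rw [if_pos rfl, if_pos rfl]
    rw [abs_of_pos (by positivity), smul_eq_mul]
    have h2 : Real.sqrt (2 * π) = Real.sqrt 2 * Real.sqrt π := Real.sqrt_mul (by norm_num) _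
    rw [h2]
    have hs : Real.sqrt 2 ≠ 0 := ne_of_gt sqrt2_pos
    have hsq : (Real.sqrt 2) * (Real.sqrt 2) = 2 := Real.mul_self_sqrt (by norm_num)
    field_simp
    have hpow : (Real.sqrt 2) ^ j * (Real.sqrt 2) ^ j = 2 ^ j := by
      rw [← mul_pow, hsq]
    rw [← hpow]
    ring
  · rw [if_neg h, if_neg h]
    simp

lemma Qp_orth (j k : ℕ) :
    (∫ x : ℝ, (Qp j).eval x * ((Qp k).eval x * Real.exp (-x ^ 2)))
      = if j = k then (Nat.factorial k : ℝ) * Real.sqrt π / 2 ^ k else 0 := by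
  rcases le_total j k with h | h
  · exact Qp_orth_le h
  · have := Qp_orth_le h
    have hswap : (∫ x : ℝ, (Qp j).eval x * ((Qp k).eval x * Real.exp (-x ^ 2)))
        = ∫ x : ℝ, (Qp k).eval x * ((Qp j).eval x * Real.exp (-x ^ 2)) := by
      congr 1; funext x; ring
    rw [hswap, this]
    rcases eq_or_ne j k with h' | h'
    · subst h'; simp
    · rw [if_neg (Ne.symm h'), if_neg h']

lemma integrable_Qp_pair (a b : ℕ) :
    Integrable fun y : ℝ => (Qp a).eval y * ((Qp b).eval y * Real.exp (-y ^ 2)) := by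
  have := integrable_poly_gauss (Qp a * Qp b) (b := (1:ℝ)) one_pos
  convert this using 2 with y
  rw [Polynomial.eval_mul]
  ring_nf

noncomputable def Fn (n : ℕ) (x : Fin n → ℝ) : ℝ :=
  (∏ i : Fin n, ∏ j ∈ Finset.Ioi i, (x i - x j)) ^ 2 * ∏ i, Real.exp (-(x i) ^ 2)

noncomputable def FF (n : ℕ) (σ τ : Equiv.Perm (Fin n)) (i : Fin n) : ℝ → ℝ :=
  fun y => (Qp ((σ⁻¹ i : Fin n) : ℕ)).eval y *
    ((Qp ((τ⁻¹ i : Fin n) : ℕ)).eval y * Real.exp (-y ^ 2))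

noncomputable def cc (n : ℕ) (σ τ : Equiv.Perm (Fin n)) : ℝ :=
  ((Equiv.Perm.sign σ : ℤ) : ℝ) * ((Equiv.Perm.sign τ : ℤ) : ℝ)

lemma prod_Ioi_sq_eq_det_sq {n : ℕ} (x : Fin n → ℝ) :
    (∏ i : Fin n, ∏ j ∈ Finset.Ioi i, (x i - x j)) ^ 2 = ((Matrix.vandermonde x).det) ^ 2 := by
  rw [Matrix.det_vandermonde]
  simp only [← Finset.prod_pow]
  exact Finset.prod_congr rfl fun i _ => Finset.prod_congr rfl fun j _ => by ring

lemma sign_cast_sq {n : ℕ} (σ : Equiv.Perm (Fin n)) :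
    ((Equiv.Perm.sign σ : ℤ) : ℝ) * ((Equiv.Perm.sign σ : ℤ) : ℝ) = 1 := by
  have := Int.units_mul_self (Equiv.Perm.sign σ)
  have h2 : ((Equiv.Perm.sign σ * Equiv.Perm.sign σ : ℤˣ) : ℤ) = 1 := by rw [this]; rfl
  exact_mod_cast congrArg (Int.cast : ℤ → ℝ) h2

lemma Fn_symm {n : ℕ} (pe : Equiv.Perm (Fin n)) (x : Fin n → ℝ) :
    Fn n (fun i => x (pe i)) = Fn n x := by
  unfold Fn
  have h1 : (∏ i : Fin n, Real.exp (-(x (pe i)) ^ 2)) = ∏ i, Real.exp (-(x i) ^ 2) :=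
    Equiv.prod_comp pe (fun i => Real.exp (-(x i) ^ 2))
  rw [h1, prod_Ioi_sq_eq_det_sq, prod_Ioi_sq_eq_det_sq]
  congr 1
  have h2 : Matrix.vandermonde (fun i => x (pe i))
      = (Matrix.vandermonde x).submatrix pe id := by
    ext i j; simp [Matrix.vandermonde, Matrix.submatrix]
  rw [h2, Matrix.det_permute]
  rw [mul_pow, sq (((Equiv.Perm.sign pe : ℤ) : ℝ)), sign_cast_sq, one_mul]

lemma Fn_repr {n : ℕ} (x : Fin n → ℝ) :
    Fn n x = ∑ σ : Equiv.Perm (Fin n), ∑ τ : Equiv.Perm (Fin n),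
      cc n σ τ * ∏ i, FF n σ τ i (x i) := by
  classical
  have hdet : (Matrix.vandermonde x).det
      = ∑ σ : Equiv.Perm (Fin n), ((Equiv.Perm.sign σ : ℤ) : ℝ) *
          ∏ i : Fin n, (Qp (i : ℕ)).eval (x (σ i)) := by
    rw [Matrix.det_eval_matrixOfPolynomials_eq_det_vandermonde x (fun i => Qp i)
      (fun i => Qp_natDegree i) (fun i => Qp_monic i), Matrix.det_apply']
    exact Finset.sum_congr rfl fun σ _ => by simp [Matrix.of_apply]
  have ha : ∀ (σ : Equiv.Perm (Fin n)),
      (∏ i : Fin n, (Qp (i : ℕ)).eval (x (σ i)))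
        = ∏ i : Fin n, (Qp (((σ⁻¹ : Equiv.Perm (Fin n)) i : Fin n) : ℕ)).eval (x i) := by
    intro σ
    rw [← Equiv.prod_comp σ
      (fun i => (Qp (((σ⁻¹ : Equiv.Perm (Fin n)) i : Fin n) : ℕ)).eval (x i))]
    simp
  unfold Fn
  rw [prod_Ioi_sq_eq_det_sq, hdet, sq, Finset.sum_mul_sum, Finset.sum_mul]
  refine Finset.sum_congr rfl fun σ _ => ?_
  rw [Finset.sum_mul]
  refine Finset.sum_congr rfl fun τ _ => ?_
  have h3 : (∏ i : Fin n, (Qp (i : ℕ)).eval (x (σ i))) *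
        (∏ i : Fin n, (Qp (i : ℕ)).eval (x (τ i)))
      * ∏ i, Real.exp (-(x i) ^ 2) = ∏ i, FF n σ τ i (x i) := by
    rw [ha σ, ha τ, ← Finset.prod_mul_distrib, ← Finset.prod_mul_distrib]
    exact Finset.prod_congr rfl fun i _ => by unfold FF; ring
  calc ((Equiv.Perm.sign σ : ℤ) : ℝ) * (∏ i : Fin n, (Qp (i : ℕ)).eval (x (σ i))) *
          (((Equiv.Perm.sign τ : ℤ) : ℝ) * ∏ i : Fin n, (Qp (i : ℕ)).eval (x (τ i))) *
          ∏ i, Real.exp (-(x i) ^ 2)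
      = cc n σ τ * ((∏ i : Fin n, (Qp (i : ℕ)).eval (x (σ i))) *
          (∏ i : Fin n, (Qp (i : ℕ)).eval (x (τ i)))
          * ∏ i, Real.exp (-(x i) ^ 2)) := by unfold cc; ring
    _ = cc n σ τ * ∏ i, FF n σ τ i (x i) := by rw [h3]

lemma integrable_FF_prod {n : ℕ} (σ τ : Equiv.Perm (Fin n)) :
    Integrable (fun x : Fin n → ℝ => ∏ i, FF n σ τ i (x i)) :=
  Integrable.fintype_prod (fun i => integrable_Qp_pair _ _)

lemma integrable_Fn (n : ℕ) : Integrable (Fn n) := by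
  have : Fn n = fun x => ∑ σ : Equiv.Perm (Fin n), ∑ τ : Equiv.Perm (Fin n),
      cc n σ τ * ∏ i, FF n σ τ i (x i) := funext Fn_repr
  rw [this]
  exact integrable_finset_sum _ (fun σ _ => integrable_finset_sum _
    (fun τ _ => (integrable_FF_prod σ τ).const_mul _))

lemma vandermonde_gauss (n : ℕ) :
    (∫ x : Fin n → ℝ, Fn n x)
      = (Nat.factorial n : ℝ) *
          ∏ k ∈ Finset.range n, ((Nat.factorial k : ℝ) * Real.sqrt π / 2 ^ k) := by
  classical
  calc (∫ x : Fin n → ℝ, Fn n x)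
      = ∫ x : Fin n → ℝ, ∑ σ : Equiv.Perm (Fin n), ∑ τ : Equiv.Perm (Fin n),
          cc n σ τ * ∏ i, FF n σ τ i (x i) :=
        integral_congr_ae (Filter.Eventually.of_forall Fn_repr)
    _ = ∑ σ : Equiv.Perm (Fin n), ∑ τ : Equiv.Perm (Fin n),
          cc n σ τ * ∫ x : Fin n → ℝ, ∏ i, FF n σ τ i (x i) := by
        rw [integral_finset_sum _ (fun σ _ => integrable_finset_sum _
          (fun τ _ => ((integrable_FF_prod σ τ).const_mul _)))]
        exact Finset.sum_congr rfl fun σ _ => by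
          rw [integral_finset_sum _ (fun τ _ => ((integrable_FF_prod σ τ).const_mul _))]
          exact Finset.sum_congr rfl fun τ _ => integral_const_mul _ _
    _ = ∑ σ : Equiv.Perm (Fin n), ∑ τ : Equiv.Perm (Fin n),
          cc n σ τ * if σ = τ then
            ∏ k ∈ Finset.range n, ((Nat.factorial k : ℝ) * Real.sqrt π / 2 ^ k) else 0 := by
        refine Finset.sum_congr rfl fun σ _ => Finset.sum_congr rfl fun τ _ => ?_
        congr 1
        rw [MeasureTheory.integral_fintype_prod_volume_eq_prod (fun i => FF n σ τ i)]
        unfold FF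
        simp_rw [Qp_orth]
        rcases eq_or_ne σ τ with h | h
        · subst h
          rw [if_pos rfl]
          simp only [if_true]
          rw [show (∏ i : Fin n, ((Nat.factorial ((σ⁻¹ i : Fin n) : ℕ) : ℝ) * Real.sqrt π /
              2 ^ ((σ⁻¹ i : Fin n) : ℕ)))
            = ∏ i : Fin n, ((Nat.factorial (i : ℕ) : ℝ) * Real.sqrt π / 2 ^ (i : ℕ)) from
            Equiv.prod_comp (σ⁻¹ : Equiv.Perm (Fin n))
              (fun i : Fin n => (Nat.factorial (i : ℕ) : ℝ) * Real.sqrt π / 2 ^ (i : ℕ))]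
          rw [Fin.prod_univ_eq_prod_range (fun k => (Nat.factorial k : ℝ) * Real.sqrt π / 2 ^ k)]
        · rw [if_neg h]
          have : ∃ i : Fin n, (σ⁻¹ : Equiv.Perm (Fin n)) i ≠ (τ⁻¹ : Equiv.Perm (Fin n)) i := by
            by_contra hcon
            push_neg at hcon
            exact h (by
              have : (σ⁻¹ : Equiv.Perm (Fin n)) = τ⁻¹ := Equiv.ext hcon
              simpa [inv_inv] using congrArg (·⁻¹) this)
          obtain ⟨i, hi⟩ := this
          refine Finset.prod_eq_zero (Finset.mem_univ i) ?_
          rw [if_neg (fun hval => hi (Fin.val_injective hval))]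
    _ = ∑ σ : Equiv.Perm (Fin n),
          ∏ k ∈ Finset.range n, ((Nat.factorial k : ℝ) * Real.sqrt π / 2 ^ k) := by
        refine Finset.sum_congr rfl fun σ _ => ?_
        rw [Finset.sum_eq_single σ]
        · rw [if_pos rfl]
          have : cc n σ σ = 1 := sign_cast_sq σ
          rw [this, one_mul]
        · intro τ _ hτ
          rw [if_neg (Ne.symm hτ), mul_zero]
        · intro h; exact absurd (Finset.mem_univ σ) h
    _ = (Nat.factorial n : ℝ) *
          ∏ k ∈ Finset.range n, ((Nat.factorial k : ℝ) * Real.sqrt π / 2 ^ k) := by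
        rw [Finset.sum_const, Finset.card_univ, Fintype.card_perm, Fintype.card_fin,
          nsmul_eq_mul]

def coneS (n : ℕ) : Set (Fin n → ℝ) := {x | ∀ i j : Fin n, i ≤ j → x j ≤ x i}

def coneP (n : ℕ) (σ : Equiv.Perm (Fin n)) : Set (Fin n → ℝ) :=
  {x | ∀ i j : Fin n, i < j → x (σ j) < x (σ i)}

def badN (n : ℕ) : Set (Fin n → ℝ) := ⋃ (i : Fin n) (j : Fin n) (_ : i ≠ j), {x | x i = x j}

lemma measurableSet_coneS (n : ℕ) : MeasurableSet (coneS n) := by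
  have : coneS n = ⋂ (i : Fin n) (j : Fin n), {x : Fin n → ℝ | i ≤ j → x j ≤ x i} := by
    ext x; simp [coneS, Set.mem_iInter]
  rw [this]
  refine MeasurableSet.iInter fun i => MeasurableSet.iInter fun j => ?_
  by_cases h : i ≤ j
  · have : {x : Fin n → ℝ | i ≤ j → x j ≤ x i} = {x | x j ≤ x i} := by
      ext x; simp [h]
    rw [this]
    exact measurableSet_le (measurable_pi_apply j) (measurable_pi_apply i)
  · have : {x : Fin n → ℝ | i ≤ j → x j ≤ x i} = Set.univ := by
      ext x; simp [h]
    rw [this]; exact MeasurableSet.univ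

lemma measurableSet_coneP (n : ℕ) (σ : Equiv.Perm (Fin n)) : MeasurableSet (coneP n σ) := by
  have : coneP n σ = ⋂ (i : Fin n) (j : Fin n), {x : Fin n → ℝ | i < j → x (σ j) < x (σ i)} := by
    ext x; simp [coneP, Set.mem_iInter]
  rw [this]
  refine MeasurableSet.iInter fun i => MeasurableSet.iInter fun j => ?_
  by_cases h : i < j
  · have : {x : Fin n → ℝ | i < j → x (σ j) < x (σ i)} = {x | x (σ j) < x (σ i)} := by
      ext x; simp [h]
    rw [this]
    exact measurableSet_lt (measurable_pi_apply _) (measurable_pi_apply _)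
  · have : {x : Fin n → ℝ | i < j → x (σ j) < x (σ i)} = Set.univ := by
      ext x; simp [h]
    rw [this]; exact MeasurableSet.univ

lemma hyperplane_null {n : ℕ} {i j : Fin n} (hij : i ≠ j) :
    volume {x : Fin n → ℝ | x i = x j} = 0 := by
  set L : (Fin n → ℝ) →ₗ[ℝ] ℝ := (LinearMap.proj i : (Fin n → ℝ) →ₗ[ℝ] ℝ) - (LinearMap.proj j : (Fin n → ℝ) →ₗ[ℝ] ℝ) with hL
  have hker : {x : Fin n → ℝ | x i = x j} = (LinearMap.ker L : Set (Fin n → ℝ)) := by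
    ext x
    simp [hL, LinearMap.mem_ker, LinearMap.sub_apply, LinearMap.proj_apply, sub_eq_zero, eq_comm]
  rw [hker]
  apply Measure.addHaar_submodule
  intro htop
  rw [LinearMap.ker_eq_top] at htop
  have := congrArg (fun (f : (Fin n → ℝ) →ₗ[ℝ] ℝ) => f (Pi.single i 1)) htop
  simp [hL, LinearMap.sub_apply, LinearMap.proj_apply, Pi.single_eq_same,
    Pi.single_eq_of_ne (Ne.symm hij)] at this

lemma badN_null (n : ℕ) : volume (badN n) = 0 := by
  refine measure_iUnion_null fun i => measure_iUnion_null fun j => ?_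
  rcases eq_or_ne i j with h | h
  · subst h; simp
  · refine le_antisymm ?_ zero_le
    calc volume (⋃ (_ : i ≠ j), {x : Fin n → ℝ | x i = x j})
        ≤ volume {x : Fin n → ℝ | x i = x j} := measure_mono (Set.iUnion_subset fun _ => le_refl _)
      _ = 0 := hyperplane_null h

lemma perm_strictMono_eq_one {n : ℕ} {ρ : Equiv.Perm (Fin n)} (h : StrictMono ρ) : ρ = 1 :=
  Equiv.ext fun i => by
    simpa using congrArg (fun (f : Fin n ≃o Fin n) => f i)
      (Subsingleton.elim (StrictMono.orderIsoOfSurjective ρ h ρ.surjective) (OrderIso.refl (Fin n)))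

lemma coneP_disjoint {n : ℕ} {σ τ : Equiv.Perm (Fin n)} (h : σ ≠ τ) :
    Disjoint (coneP n σ) (coneP n τ) := by
  rw [Set.disjoint_left]
  intro x hσ hτ
  apply h
  set ρ : Equiv.Perm (Fin n) := σ⁻¹ * τ with hρ
  have hmono : StrictMono (ρ : Fin n → Fin n) := by
    intro i j hij
    rcases lt_trichotomy (ρ i) (ρ j) with h1 | h1 | h1
    · exact h1
    · exact absurd (ρ.injective h1) (ne_of_lt hij)
    · exfalso
      have h2 := hσ _ _ h1
      have h3 : σ (ρ i) = τ i := by simp [hρ]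
      have h4 : σ (ρ j) = τ j := by simp [hρ]
      rw [h3, h4] at h2
      exact absurd (hτ _ _ hij) (not_lt.mpr h2.le)
  have := perm_strictMono_eq_one hmono
  rw [hρ] at this
  exact inv_mul_eq_one.mp this

lemma cover_coneP {n : ℕ} (x : Fin n → ℝ) (hx : x ∉ badN n) :
    ∃ σ : Equiv.Perm (Fin n), x ∈ coneP n σ := by
  have hinj : Function.Injective x := by
    intro i j hij
    by_contra h
    exact hx (Set.mem_iUnion.mpr ⟨i, Set.mem_iUnion.mpr ⟨j, Set.mem_iUnion.mpr ⟨h, hij⟩⟩⟩)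
  have hmono := Tuple.monotone_sort x
  have hsm : StrictMono (x ∘ (Tuple.sort x)) :=
    hmono.strictMono_of_injective (hinj.comp (Tuple.sort x).injective)
  refine ⟨(Tuple.sort x) * Fin.revPerm, fun i j hij => ?_⟩
  have : (j : Fin n).rev < (i : Fin n).rev := Fin.rev_lt_rev.mpr hij
  simpa using hsm this

lemma setIntegral_coneP_eq {n : ℕ} (σ : Equiv.Perm (Fin n)) :
    (∫ x in coneP n σ, Fn n x) = ∫ x in coneP n 1, Fn n x := by
  classical
  set T := MeasurableEquiv.piCongrLeft (fun _ : Fin n => ℝ) (σ⁻¹ : Equiv.Perm (Fin n)) with hT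
  have mp : MeasurePreserving T :=
    volume_measurePreserving_piCongrLeft (fun _ => ℝ) (σ⁻¹ : Equiv.Perm (Fin n))
  have happ : ∀ (x : Fin n → ℝ) (j : Fin n), T x j = x (σ j) := by
    intro x j
    have : T x ((σ⁻¹ : Equiv.Perm (Fin n)) (σ j)) = x (σ j) := by
      rw [hT, MeasurableEquiv.coe_piCongrLeft]
      exact Equiv.piCongrLeft_apply_apply (fun _ => ℝ) (σ⁻¹ : Equiv.Perm (Fin n)) x (σ j)
    simpa using this
  have hpre : (⇑T) ⁻¹' (coneP n 1) = coneP n σ := by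
    ext x
    simp only [Set.mem_preimage, coneP, Set.mem_setOf_eq, Equiv.Perm.coe_one, id_eq]
    constructor
    · intro h i j hij; have := h i j hij; rwa [happ, happ] at this
    · intro h i j hij; rw [happ, happ]; exact h i j hij
  have key := mp.setIntegral_preimage_emb (T.measurableEmbedding) (Fn n) (coneP n 1)
  rw [hpre] at key
  rw [← key]
  refine setIntegral_congr_ae (measurableSet_coneP n σ) ?_
  refine Filter.Eventually.of_forall fun x _ => ?_
  have : T x = fun j => x (σ j) := funext (happ x)
  rw [this, Fn_symm σ x]

lemma integral_Fn_decomp (n : ℕ) :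
    (∫ x : Fin n → ℝ, Fn n x)
      = (Nat.factorial n : ℝ) * ∫ x in coneP n 1, Fn n x := by
  classical
  have hcover : (Set.univ : Set (Fin n → ℝ)) =ᵐ[volume]
      (⋃ σ ∈ (Finset.univ : Finset (Equiv.Perm (Fin n))), coneP n σ) := by
    rw [Filter.eventuallyEq_set]
    have : ∀ᵐ x : Fin n → ℝ, x ∉ badN n :=
      (ae_iff.mpr (by simpa using badN_null n))
    filter_upwards [this] with x hx
    simp only [Set.mem_univ, true_iff, Set.mem_iUnion]
    obtain ⟨σ, hσ⟩ := cover_coneP x hx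
    exact ⟨σ, Finset.mem_univ σ, hσ⟩
  calc (∫ x : Fin n → ℝ, Fn n x)
      = ∫ x in (Set.univ : Set (Fin n → ℝ)), Fn n x := setIntegral_univ.symm
    _ = ∫ x in (⋃ σ ∈ (Finset.univ : Finset (Equiv.Perm (Fin n))), coneP n σ), Fn n x :=
        setIntegral_congr_set hcover
    _ = ∑ σ : Equiv.Perm (Fin n), ∫ x in coneP n σ, Fn n x := by
        refine integral_biUnion_finset Finset.univ (fun σ _ => measurableSet_coneP n σ)
          ?_ (fun σ _ => (integrable_Fn n).integrableOn)
        intro σ _ τ _ hστ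
        exact coneP_disjoint hστ
    _ = ∑ _σ : Equiv.Perm (Fin n), ∫ x in coneP n 1, Fn n x :=
        Finset.sum_congr rfl fun σ _ => setIntegral_coneP_eq σ
    _ = (Nat.factorial n : ℝ) * ∫ x in coneP n 1, Fn n x := by
        rw [Finset.sum_const, Finset.card_univ, Fintype.card_perm, Fintype.card_fin, nsmul_eq_mul]

lemma coneS_ae_coneP (n : ℕ) : coneS n =ᵐ[volume] coneP n 1 := by
  have hsub : coneP n 1 ⊆ coneS n := by
    intro x hx i j hij
    rcases eq_or_lt_of_le hij with h | h
    · subst h; exact le_refl _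
    · exact (hx i j h).le
  have hdiff : coneS n \ coneP n 1 ⊆ badN n := by
    intro x ⟨hxS, hxP⟩
    simp only [coneP, Set.mem_setOf_eq, Equiv.Perm.coe_one, id_eq, not_forall] at hxP
    obtain ⟨i, j, hij, hnlt⟩ := hxP
    have hle := hxS i j hij.le
    have : x i = x j := le_antisymm (not_lt.mp hnlt) hle
    exact Set.mem_iUnion.mpr ⟨i, Set.mem_iUnion.mpr ⟨j,
      Set.mem_iUnion.mpr ⟨hij.ne, this⟩⟩⟩
  refine (MeasureTheory.ae_eq_set.mpr ⟨?_, ?_⟩)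
  · exact measure_mono_null hdiff (badN_null n)
  · have : coneP n 1 \ coneS n = ∅ := Set.diff_eq_empty.mpr hsub
    rw [this]
    simp


/-- The GUE ordered-eigenvalue density
`K ∏_{i<j}(xᵢ−xⱼ)² ∏ᵢ e^(−xᵢ²)` with
`K = 2^(n(n−1)/2) / (π^(n/2) ∏_{i=1}^n Γ(i))` integrates to 1 over the ordered cone
`x₁ ≥ ⋯ ≥ xₙ` (Mehta integral, β = 2). -/
theorem gue_density_integral (n : ℕ) :
    (∫ x in {x : Fin n → ℝ | ∀ i j : Fin n, i ≤ j → x j ≤ x i},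
      (2 : ℝ) ^ (n * (n - 1) / 2) /
          (Real.pi ^ ((n : ℝ) / 2) * ∏ i ∈ Finset.range n, Real.Gamma ((i : ℝ) + 1)) *
        ((∏ i : Fin n, ∏ j ∈ Finset.Ioi i, (x i - x j)) ^ 2 *
          ∏ i, Real.exp (-(x i) ^ 2))) = 1 := by
  set K : ℝ := (2 : ℝ) ^ (n * (n - 1) / 2) /
      (Real.pi ^ ((n : ℝ) / 2) * ∏ i ∈ Finset.range n, Real.Gamma ((i : ℝ) + 1)) with hK
  have hgoal : (∫ x in {x : Fin n → ℝ | ∀ i j : Fin n, i ≤ j → x j ≤ x i},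
      K * ((∏ i : Fin n, ∏ j ∈ Finset.Ioi i, (x i - x j)) ^ 2 *
          ∏ i, Real.exp (-(x i) ^ 2)))
      = K * ∫ x in coneS n, Fn n x := by
    rw [MeasureTheory.integral_const_mul]
    rfl
  rw [hgoal]
  -- compute the cone integral
  have hd := integral_Fn_decomp n
  rw [vandermonde_gauss n] at hd
  have hfac : ((Nat.factorial n : ℝ)) ≠ 0 := by
    exact_mod_cast Nat.factorial_ne_zero n
  have hC1 : (∫ x in coneP n 1, Fn n x)
      = ∏ k ∈ Finset.range n, ((Nat.factorial k : ℝ) * Real.sqrt π / 2 ^ k) :=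
    (mul_left_cancel₀ hfac hd.symm)
  have hS : (∫ x in coneS n, Fn n x)
      = ∏ k ∈ Finset.range n, ((Nat.factorial k : ℝ) * Real.sqrt π / 2 ^ k) := by
    rw [setIntegral_congr_set (coneS_ae_coneP n), hC1]
  rw [hS]
  -- arithmetic
  have hΓ : (∏ i ∈ Finset.range n, Real.Gamma ((i : ℝ) + 1))
      = ∏ i ∈ Finset.range n, (Nat.factorial i : ℝ) :=
    Finset.prod_congr rfl fun i _ => Real.Gamma_nat_eq_factorial i
  have hsqrtpow : Real.sqrt π ^ n = π ^ ((n : ℝ) / 2) := by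
    rw [← Real.rpow_natCast (Real.sqrt π) n, Real.sqrt_eq_rpow,
      ← Real.rpow_mul Real.pi_pos.le]
    congr 1
    ring
  have hprod : (∏ k ∈ Finset.range n, ((Nat.factorial k : ℝ) * Real.sqrt π / 2 ^ k))
      = (∏ k ∈ Finset.range n, (Nat.factorial k : ℝ)) * π ^ ((n : ℝ) / 2)
        / 2 ^ (n * (n - 1) / 2) := by
    rw [Finset.prod_div_distrib, Finset.prod_mul_distrib, Finset.prod_const,
      Finset.prod_pow_eq_pow_sum, Finset.sum_range_id, Finset.card_range, hsqrtpow]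
  rw [hprod, hK, hΓ]
  have h1 : (0:ℝ) < π ^ ((n : ℝ) / 2) := Real.rpow_pos_of_pos Real.pi_pos _
  have h2 : (0:ℝ) < ∏ k ∈ Finset.range n, (Nat.factorial k : ℝ) :=
    Finset.prod_pos fun k _ => by exact_mod_cast Nat.factorial_pos k
  have h3 : (0:ℝ) < (2:ℝ) ^ (n * (n - 1) / 2) := by positivity
  field_simp
end
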